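/- Let α and β be real numbers with 0 < α ≤ β ≤ 1. Then for every t ≥ 0, W(t) := −2α sinh((2−α)t) + 2(2−α) sinh(αt) − (2−α−β) sinh((α+β)t) + (α+β) sinh((2−α−β)t) − (β−α) sinh((2−β+α)t) + (2−β+α) sinh((β−α)t) ≤ 0. -/

import Mathlib

/-!
Write `Q = N / (2 sinh)` with `N t = 2 sinh((1-α)t) + sinh((α+β-1)t) + sinh((1-β+α)t)`.
Product-to-sum formulas give `W = 2 (N' sinh - N cosh)`, and `N' sinh - N cosh` vanishes at `0`
with derivative `(N'' - N) sinh`, so it suffices that `N'' ≤ N` on `(0, ∞)`. Here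
`N - N'' = Σ aᵢ (1 - cᵢ²) sinh(cᵢ t)`, where only the term with `c = α + β - 1` can be negative;
it is dominated by the other two because `sinh(c t) / c` increases in `c ≥ 0` (convexity of
`sinh` on `[0, ∞)`), which reduces everything to a cubic inequality in `α, β`.
-/

open Real

lemma convexOn_sinh : ConvexOn ℝ (Set.Ici 0) sinh := by
  refine MonotoneOn.convexOn_of_deriv (convex_Ici 0) continuous_sinh.continuousOn
    differentiable_sinh.differentiableOn ?_
  rw [Real.deriv_sinh, interior_Ici]
  intro x hx y hy hxy
  rw [cosh_le_cosh, abs_of_pos hx, abs_of_pos hy]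
  exact hxy

lemma mul_sinh_mul_le_mul_sinh_mul {y u t : ℝ} (hy : 0 ≤ y) (hyu : y ≤ u) (ht : 0 ≤ t) :
    u * sinh (y * t) ≤ y * sinh (u * t) := by
  rcases (hy.trans hyu).eq_or_lt with rfl | hu
  · simp
  have hconv := convexOn_sinh.2 (Set.self_mem_Ici (a := (0:ℝ))) (show u * t ∈ Set.Ici 0 from
    mul_nonneg hu.le ht) (sub_nonneg.2 ((div_le_one hu).2 hyu)) (div_nonneg hy hu.le)
    (sub_add_cancel 1 (y / u))
  have hyt : (1 - y / u) • (0 : ℝ) + (y / u) • (u * t) = y * t := by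
    simp only [smul_eq_mul, mul_zero, zero_add]; field_simp
  rw [hyt, sinh_zero, smul_zero, zero_add, smul_eq_mul] at hconv
  calc u * sinh (y * t) ≤ u * (y / u * sinh (u * t)) := by gcongr
    _ = y * sinh (u * t) := by field_simp

lemma mul_cosh_mul_sinh_sub_sinh_mul_cosh {c p q : ℝ} (hp : p = 1 + c) (hq : q = 1 - c)
    (t : ℝ) :
    2 * (c * cosh (c * t) * sinh t - sinh (c * t) * cosh t)
      = (c - 1) * sinh (p * t) + (c + 1) * sinh (q * t) := by
  subst hp hq
  rw [show (1 + c) * t = t + c * t by ring, show (1 - c) * t = t - c * t by ring, sinh_add,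
    sinh_sub]
  ring

lemma mul_sinh_sub_mul_cosh_nonpos {N N' N'' : ℝ → ℝ} (hN : ∀ x, HasDerivAt N (N' x) x)
    (hN' : ∀ x, HasDerivAt N' (N'' x) x) (hN₀ : N 0 = 0) (hle : ∀ x, 0 < x → N'' x ≤ N x)
    {t : ℝ} (ht : 0 ≤ t) : N' t * sinh t - N t * cosh t ≤ 0 := by
  have hV : ∀ x, HasDerivAt (N' * sinh - N * cosh) ((N'' x - N x) * sinh x) x := fun x =>
    (((hN' x).mul (hasDerivAt_sinh x)).sub ((hN x).mul (hasDerivAt_cosh x))).congr_deriv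
      (by ring)
  have hVd : Differentiable ℝ (N' * sinh - N * cosh) := fun x => (hV x).differentiableAt
  have hanti : AntitoneOn (N' * sinh - N * cosh) (Set.Ici 0) := by
    refine antitoneOn_of_deriv_nonpos (convex_Ici 0) hVd.continuous.continuousOn
      hVd.differentiableOn fun x hx => ?_
    rw [interior_Ici] at hx
    rw [(hV x).deriv]
    exact mul_nonpos_of_nonpos_of_nonneg (sub_nonpos.2 (hle x hx)) (sinh_nonneg_iff.2 hx.le)
  simpa [hN₀] using hanti Set.self_mem_Ici ht ht

lemma sinh_combination_nonneg {α β t : ℝ} (hα : 0 ≤ α) (hαβ : α ≤ β) (hβ : β ≤ 1)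
    (ht : 0 ≤ t) :
    0 ≤ 2 * (1 - (1 - α) ^ 2) * sinh ((1 - α) * t)
      + (1 - (α + β - 1) ^ 2) * sinh ((α + β - 1) * t)
      + (1 - (1 - β + α) ^ 2) * sinh ((1 - β + α) * t) := by
  have hs₁ : 0 ≤ sinh ((1 - α) * t) := sinh_nonneg_iff.2 (mul_nonneg (by linarith) ht)
  have hs₂ : 0 ≤ sinh ((1 - β + α) * t) := sinh_nonneg_iff.2 (mul_nonneg (by linarith) ht)
  have hk₁ : 0 ≤ 1 - (1 - α) ^ 2 := by nlinarith
  have hk₂ : 0 ≤ 1 - (1 - β + α) ^ 2 := by nlinarith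
  rcases le_or_gt 0 (α + β - 1) with h | h
  · have hs₃ : 0 ≤ sinh ((α + β - 1) * t) := sinh_nonneg_iff.2 (mul_nonneg h ht)
    have hk₃ : 0 ≤ 1 - (α + β - 1) ^ 2 := by nlinarith
    positivity
  set y := 1 - α - β
  have hy : 0 < y := by linarith
  rw [show (α + β - 1) * t = -(y * t) by ring, sinh_neg, show (α + β - 1) ^ 2 = y ^ 2 by ring]
  have hsy : 0 ≤ sinh (y * t) := sinh_nonneg_iff.2 (mul_nonneg hy.le ht)
  have r₁ : (1 - α) * sinh (y * t) ≤ y * sinh ((1 - α) * t) :=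
    mul_sinh_mul_le_mul_sinh_mul hy.le (by linarith) ht
  have r₂ : (1 - β + α) * sinh (y * t) ≤ y * sinh ((1 - β + α) * t) :=
    mul_sinh_mul_le_mul_sinh_mul hy.le (by linarith) ht
  -- the cubic weights of the three terms differ by `6α(β(1 - β) + (β - α)) ≥ 0`
  have hcubic : y * (1 - y ^ 2)
      ≤ 2 * (1 - (1 - α) ^ 2) * (1 - α) + (1 - (1 - β + α) ^ 2) * (1 - β + α) := by
    nlinarith [mul_nonneg hα (add_nonneg (mul_nonneg (hα.trans hαβ) (sub_nonneg.2 hβ))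
      (sub_nonneg.2 hαβ))]
  suffices h : (1 - y ^ 2) * sinh (y * t)
      ≤ 2 * (1 - (1 - α) ^ 2) * sinh ((1 - α) * t)
        + (1 - (1 - β + α) ^ 2) * sinh ((1 - β + α) * t) by linarith
  refine le_of_mul_le_mul_left ?_ hy
  calc y * ((1 - y ^ 2) * sinh (y * t))
      ≤ (2 * (1 - (1 - α) ^ 2) * (1 - α) + (1 - (1 - β + α) ^ 2) * (1 - β + α))
          * sinh (y * t) := by
        rw [← mul_assoc]; exact mul_le_mul_of_nonneg_right hcubic hsy
    _ = 2 * (1 - (1 - α) ^ 2) * ((1 - α) * sinh (y * t))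
          + (1 - (1 - β + α) ^ 2) * ((1 - β + α) * sinh (y * t)) := by ring
    _ ≤ 2 * (1 - (1 - α) ^ 2) * (y * sinh ((1 - α) * t))
          + (1 - (1 - β + α) ^ 2) * (y * sinh ((1 - β + α) * t)) := by gcongr
    _ = y * (2 * (1 - (1 - α) ^ 2) * sinh ((1 - α) * t)
          + (1 - (1 - β + α) ^ 2) * sinh ((1 - β + α) * t)) := by ring

lemma hasDerivAt_sinh_mul (c x : ℝ) : HasDerivAt (fun t => sinh (c * t)) (c * cosh (c * x)) x :=
  ((hasDerivAt_id x).const_mul c).sinh.congr_deriv (by simp [mul_comm])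

lemma hasDerivAt_cosh_mul (c x : ℝ) : HasDerivAt (fun t => cosh (c * t)) (c * sinh (c * x)) x :=
  ((hasDerivAt_id x).const_mul c).cosh.congr_deriv (by simp [mul_comm])

section Numerator

variable (α β : ℝ)

noncomputable def qNum (t : ℝ) : ℝ :=
  2 * sinh ((1 - α) * t) + sinh ((α + β - 1) * t) + sinh ((1 - β + α) * t)

noncomputable def qNumDeriv (t : ℝ) : ℝ :=
  2 * (1 - α) * cosh ((1 - α) * t) + (α + β - 1) * cosh ((α + β - 1) * t)
    + (1 - β + α) * cosh ((1 - β + α) * t)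

lemma hasDerivAt_qNum (x : ℝ) : HasDerivAt (qNum α β) (qNumDeriv α β x) x :=
  (((hasDerivAt_sinh_mul _ x).const_mul 2).add (hasDerivAt_sinh_mul _ x)).add
    (hasDerivAt_sinh_mul _ x) |>.congr_deriv (by simp only [qNumDeriv]; ring)

lemma hasDerivAt_qNumDeriv (x : ℝ) :
    HasDerivAt (qNumDeriv α β)
      (qNum α β x - (2 * (1 - (1 - α) ^ 2) * sinh ((1 - α) * x)
        + (1 - (α + β - 1) ^ 2) * sinh ((α + β - 1) * x)
        + (1 - (1 - β + α) ^ 2) * sinh ((1 - β + α) * x))) x :=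
  (((hasDerivAt_cosh_mul _ x).const_mul _).add ((hasDerivAt_cosh_mul _ x).const_mul _)).add
    ((hasDerivAt_cosh_mul _ x).const_mul _) |>.congr_deriv (by simp only [qNum]; ring)

end Numerator

/-- For `0 < α ≤ β ≤ 1` and `t ≥ 0`, the quantity `W(t) = 4 sinh²(t) Q'(t)` is
nonpositive. -/
theorem stmt_16 (α β : ℝ) (hα : 0 < α) (hαβ : α ≤ β) (hβ : β ≤ 1) (t : ℝ) (ht : 0 ≤ t) :
    -2 * α * sinh ((2 - α) * t) + 2 * (2 - α) * sinh (α * t)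
      - (2 - α - β) * sinh ((α + β) * t) + (α + β) * sinh ((2 - α - β) * t)
      - (β - α) * sinh ((2 - β + α) * t) + (2 - β + α) * sinh ((β - α) * t) ≤ 0 := by
  have hW : -2 * α * sinh ((2 - α) * t) + 2 * (2 - α) * sinh (α * t)
      - (2 - α - β) * sinh ((α + β) * t) + (α + β) * sinh ((2 - α - β) * t)
      - (β - α) * sinh ((2 - β + α) * t) + (2 - β + α) * sinh ((β - α) * t)
      = 2 * (qNumDeriv α β t * sinh t - qNum α β t * cosh t) := by
    have e₁ := mul_cosh_mul_sinh_sub_sinh_mul_cosh (c := 1 - α) (p := 2 - α) (q := α)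
      (by ring) (by ring) t
    have e₂ := mul_cosh_mul_sinh_sub_sinh_mul_cosh (c := α + β - 1) (p := α + β)
      (q := 2 - α - β) (by ring) (by ring) t
    have e₃ := mul_cosh_mul_sinh_sub_sinh_mul_cosh (c := 1 - β + α) (p := 2 - β + α)
      (q := β - α) (by ring) (by ring) t
    simp only [qNum, qNumDeriv]
    linear_combination (-2) * e₁ - e₂ - e₃
  have hV := mul_sinh_sub_mul_cosh_nonpos (hasDerivAt_qNum α β) (hasDerivAt_qNumDeriv α β)
    (by simp [qNum]) (fun x hx => sub_le_self _ (sinh_combination_nonneg hα.le hαβ hβ hx.le)) ht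
  rw [hW]
  linarith
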